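/- arXiv:1011.5962 — 2 statements merged into one kernel-verified Lean document; each statement's English description precedes it below -/
import Mathlib

section
/- (Representer theorem) Let H be an RKHS on X with kernel κ, x_1,…,x_N ∈ X, c : ℝ^N → ℝ an arbitrary function, and Ω : [0,∞) → ℝ strictly increasing. Then any minimizer f* over H of the functional f ↦ c(f(x_1),…,f(x_N)) + Ω(‖f‖_H) lies in span{κ(x_1,·),…,κ(x_N,·)}, i.e., f* = ∑_{n=1}^N α_n κ(x_n,·) for some reals α_n. -/
/- A minimizer `f` can be replaced by its orthogonal projection onto the span `K` of the kernel
sections `κ(xₙ, ·)`: by the reproducing property the data term only sees `⟪f, κ(xₙ, ·)⟫`, which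
the projection preserves, while by Pythagoras the norm can only drop. Strict monotonicity of `Ω`
then forces `‖P_K f‖ = ‖f‖`, that is, `f ∈ K`. -/

open scoped RealInnerProductSpace

namespace Submodule

variable {E : Type*} [NormedAddCommGroup E] [InnerProductSpace ℝ E]

theorem mem_of_minimizer_add_norm (K : Submodule ℝ E) [K.HasOrthogonalProjection]
    {F : E → ℝ} (hF : ∀ f, F (K.starProjection f) = F f)
    {Ω : ℝ → ℝ} (hΩ : StrictMonoOn Ω (Set.Ici 0)) {f₀ : E}
    (hmin : ∀ f, F f₀ + Ω ‖f₀‖ ≤ F f + Ω ‖f‖) : f₀ ∈ K := by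
  rw [K.mem_iff_norm_starProjection]
  refine le_antisymm (K.norm_starProjection_apply_le f₀) ?_
  have hΩle : Ω ‖f₀‖ ≤ Ω ‖K.starProjection f₀‖ := by
    simpa only [hF, add_le_add_iff_left] using hmin (K.starProjection f₀)
  exact (hΩ.le_iff_le (norm_nonneg _) (norm_nonneg _)).1 hΩle

theorem inner_starProjection_of_mem_right (K : Submodule ℝ E) [K.HasOrthogonalProjection]
    (f : E) {w : E} (hw : w ∈ K) : ⟪K.starProjection f, w⟫ = ⟪f, w⟫ := by
  rw [K.inner_starProjection_left_eq_right, K.starProjection_eq_self_iff.mpr hw]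

end Submodule

open Submodule in
theorem representer_theorem_general
    {X : Type*} {H : Type*} [NormedAddCommGroup H] [InnerProductSpace ℝ H]
    (ev : H → X → ℝ) (k : X → H)
    (hrepr : ∀ (f : H) (x : X), ev f x = ⟪f, k x⟫)
    (N : ℕ) (x : Fin N → X)
    (c : (Fin N → ℝ) → ℝ)
    (Ω : ℝ → ℝ) (hΩ : StrictMonoOn Ω (Set.Ici 0))
    (fstar : H)
    (hmin : ∀ f : H,
      c (fun n => ev fstar (x n)) + Ω ‖fstar‖ ≤ c (fun n => ev f (x n)) + Ω ‖f‖) :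
    ∃ α : Fin N → ℝ, fstar = ∑ n, α n • k (x n) := by
  set K := span ℝ (Set.range fun n => k (x n))
  have : FiniteDimensional ℝ K := FiniteDimensional.span_of_finite ℝ (Set.finite_range _)
  have hproj (f : H) (n : Fin N) : ev (K.starProjection f) (x n) = ev f (x n) := by
    rw [hrepr, hrepr, K.inner_starProjection_of_mem_right f (subset_span ⟨n, rfl⟩)]
  have hmem : fstar ∈ K :=
    K.mem_of_minimizer_add_norm (F := fun f => c fun n => ev f (x n))
      (fun f => by simp only [hproj]) hΩ hmin
  obtain ⟨α, hα⟩ := (mem_span_range_iff_exists_fun ℝ).mp hmem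
  exact ⟨α, hα.symm⟩

/-- Representer theorem: a minimizer of `f ↦ c(f(x₁),…,f(x_N)) + Ω(‖f‖)` with `Ω`
strictly increasing on `[0,∞)` lies in the span of the kernel sections at the data
points. -/
theorem representer_theorem
    {X : Type*} {H : Type*} [NormedAddCommGroup H] [InnerProductSpace ℝ H]
    [CompleteSpace H]
    (ev : H → X → ℝ) (k : X → H) (κ : X → X → ℝ)
    (hκ : ∀ x y, κ x y = ev (k x) y)
    (hrepr : ∀ (f : H) (x : X), ev f x = ⟪f, k x⟫)
    (N : ℕ) (x : Fin N → X)
    (c : (Fin N → ℝ) → ℝ)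
    (Ω : ℝ → ℝ) (hΩ : StrictMonoOn Ω (Set.Ici 0))
    (fstar : H)
    (hmin : ∀ f : H,
      c (fun n => ev fstar (x n)) + Ω ‖fstar‖ ≤ c (fun n => ev f (x n)) + Ω ‖f‖) :
    ∃ α : Fin N → ℝ, fstar = ∑ n, α n • k (x n) :=
  representer_theorem_general ev k hrepr N x c Ω hΩ fstar hmin
end

section
/- (Semiparametric representer theorem) Let H be an RKHS on X with kernel κ, ψ_1,…,ψ_M : X → ℝ, x_1,…,x_N ∈ X such that the N×M matrix (ψ_p(x_n)) has rank M, c : ℝ^N → ℝ arbitrary, and Ω_1, Ω_2 : [0,∞) → ℝ strictly increasing. If f̃ = f + h with f ∈ H and h ∈ span{ψ_1,…,ψ_M} minimizes (f,h) ↦ c((f+h)(x_1),…,(f+h)(x_N)) + Ω_1(‖f‖_H) + Ω_2(‖h‖), then f̃ admits a representation f̃(x) = ∑_{n=1}^N α_n κ(x_n, x) + ∑_{k=1}^M β_k ψ_k(x). -/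
open scoped RealInnerProductSpace

/-!
Project `f` orthogonally onto the span `K` of the representers `k xₙ`. The projection has the
same values at every `xₙ`, since `f xₙ = ⟪f, k xₙ⟫` and `f - P f ⊥ K`, so the loss term is
unchanged, while `‖P f‖ ≤ ‖f‖`. Minimality and strict monotonicity of `Ω₁` force
`‖P f‖ = ‖f‖`, hence `f = P f ∈ K` by Pythagoras; the parametric part `h` is left as it is.
-/

namespace Submodule

variable {𝕜 E : Type*} [RCLike 𝕜] [NormedAddCommGroup E] [InnerProductSpace 𝕜 E]
  (K : Submodule 𝕜 E) [K.HasOrthogonalProjection]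

theorem inner_starProjection_of_mem_right_s10 (v : E) {u : E} (hu : u ∈ K) :
    inner 𝕜 (K.starProjection v) u = inner 𝕜 v u := by
  rw [← sub_eq_zero, ← inner_sub_left, ← neg_sub, inner_neg_left,
    starProjection_inner_eq_zero v u hu, neg_zero]

theorem mem_of_norm_le_norm_starProjection {v : E} (h : ‖v‖ ≤ ‖K.starProjection v‖) : v ∈ K :=
  (K.mem_iff_norm_starProjection v).2 (le_antisymm (K.norm_starProjection_apply_le v) h)

end Submodule

theorem mem_span_range_of_norm_minimal {E ι : Type*} [NormedAddCommGroup E]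
    [InnerProductSpace ℝ E] [Finite ι] (v : ι → E) {Ω : ℝ → ℝ}
    (hΩ : StrictMonoOn Ω (Set.Ici 0)) {f : E}
    (hmin : ∀ g : E, (∀ i, ⟪g, v i⟫ = ⟪f, v i⟫) → Ω ‖f‖ ≤ Ω ‖g‖) :
    f ∈ Submodule.span ℝ (Set.range v) := by
  set K := Submodule.span ℝ (Set.range v)
  have : FiniteDimensional ℝ K := FiniteDimensional.span_of_finite ℝ (Set.finite_range v)
  have hproj : ∀ i, ⟪K.starProjection f, v i⟫ = ⟪f, v i⟫ := fun i =>
    K.inner_starProjection_of_mem_right_s10 f (Submodule.subset_span ⟨i, rfl⟩)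
  exact K.mem_of_norm_le_norm_starProjection <|
    (hΩ.le_iff_le (norm_nonneg _) (norm_nonneg _)).1 (hmin _ hproj)

theorem semiparametric_representer_theorem_general
    {X : Type*} {H : Type*} [NormedAddCommGroup H] [InnerProductSpace ℝ H]
    (ev : H → X → ℝ) (k : X → H) (κ : X → X → ℝ)
    (hκ : ∀ x y, κ x y = ev (k x) y)
    (hrepr : ∀ (f : H) (x : X), ev f x = ⟪f, k x⟫)
    (N M : ℕ) (x : Fin N → X) (ψ : Fin M → X → ℝ)
    (c : (Fin N → ℝ) → ℝ)
    (Ω₁ Ω₂ : ℝ → ℝ) (hΩ₁ : StrictMonoOn Ω₁ (Set.Ici 0))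
    (nrm : (Fin M → ℝ) → ℝ)
    (f : H) (γ : Fin M → ℝ)
    (hmin : ∀ (g : H) (γ' : Fin M → ℝ),
      c (fun n => ev f (x n) + ∑ p, γ p * ψ p (x n)) + Ω₁ ‖f‖ + Ω₂ (nrm γ) ≤
      c (fun n => ev g (x n) + ∑ p, γ' p * ψ p (x n)) + Ω₁ ‖g‖ + Ω₂ (nrm γ')) :
    ∃ (α : Fin N → ℝ) (β : Fin M → ℝ), ∀ y : X,
      ev f y + ∑ p, γ p * ψ p y = ∑ n, α n * κ (x n) y + ∑ p, β p * ψ p y := by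
  have hf : f ∈ Submodule.span ℝ (Set.range fun n => k (x n)) :=
    mem_span_range_of_norm_minimal _ hΩ₁ fun g hg => by
      have := hmin g γ
      simp only [hrepr, hg] at this
      linarith
  obtain ⟨α, hα⟩ := (Submodule.mem_span_range_iff_exists_fun ℝ).1 hf
  refine ⟨α, γ, fun y => ?_⟩
  simp only [hrepr, hκ, ← hα, sum_inner, real_inner_smul_left]

/-- Semiparametric representer theorem: if `f̃ = f + h`, with `f ∈ H` and
`h = ∑ γₖ ψₖ` in the span of the functions `ψₖ` (whose evaluation matrix at the data
points has full rank `M`), minimizes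
`c((f+h)(x₁),…,(f+h)(x_N)) + Ω₁(‖f‖_H) + Ω₂(‖h‖)` (where `nrm` is the fixed norm on
the span, expressed via coordinates), then `f̃` admits the representation
`f̃(x) = ∑ₙ αₙ κ(xₙ, x) + ∑ₖ βₖ ψₖ(x)`. -/
theorem semiparametric_representer_theorem
    {X : Type*} {H : Type*} [NormedAddCommGroup H] [InnerProductSpace ℝ H]
    [CompleteSpace H]
    (ev : H → X → ℝ) (k : X → H) (κ : X → X → ℝ)
    (hκ : ∀ x y, κ x y = ev (k x) y)
    (hrepr : ∀ (f : H) (x : X), ev f x = ⟪f, k x⟫)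
    (N M : ℕ) (x : Fin N → X) (ψ : Fin M → X → ℝ)
    (hrank : (Matrix.of fun (n : Fin N) (p : Fin M) => ψ p (x n)).rank = M)
    (c : (Fin N → ℝ) → ℝ)
    (Ω₁ Ω₂ : ℝ → ℝ) (hΩ₁ : StrictMonoOn Ω₁ (Set.Ici 0))
    (hΩ₂ : StrictMonoOn Ω₂ (Set.Ici 0))
    (nrm : (Fin M → ℝ) → ℝ)
    (f : H) (γ : Fin M → ℝ)
    (hmin : ∀ (g : H) (γ' : Fin M → ℝ),
      c (fun n => ev f (x n) + ∑ p, γ p * ψ p (x n)) + Ω₁ ‖f‖ + Ω₂ (nrm γ) ≤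
      c (fun n => ev g (x n) + ∑ p, γ' p * ψ p (x n)) + Ω₁ ‖g‖ + Ω₂ (nrm γ')) :
    ∃ (α : Fin N → ℝ) (β : Fin M → ℝ), ∀ y : X,
      ev f y + ∑ p, γ p * ψ p y = ∑ n, α n * κ (x n) y + ∑ p, β p * ψ p y :=
  semiparametric_representer_theorem_general ev k κ hκ hrepr N M x ψ c Ω₁ Ω₂ hΩ₁ nrm f γ hmin
end
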